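/- For every zero-mean u in H² of the 2D torus and every real N > 0, ‖u‖_{C(𝕋²)}² ≤ (1/(4π²))·‖∇u‖_{L²}² · ( (Σ'_{0<|k|≤N} |k|^{−2})^{1/2} + δ^{1/2}·(Σ'_{|k|>N} |k|^{−4})^{1/2} )², where δ = ‖Δu‖_{L²}²/‖∇u‖_{L²}². -/

import Mathlib

set_option maxHeartbeats 1000000
open Real Complex
open scoped Classical
noncomputable section

def ksq (k : ℤ × ℤ) : ℝ := (k.1 : ℝ) ^ 2 + (k.2 : ℝ) ^ 2

lemma ksq_nonneg (k : ℤ × ℤ) : 0 ≤ ksq k := by unfold ksq; positivity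

lemma one_le_ksq {k : ℤ × ℤ} (h : k ≠ 0) : 1 ≤ ksq k := by
  have : k.1 ≠ 0 ∨ k.2 ≠ 0 := by
    by_contra hcon
    push_neg at hcon
    exact h (Prod.ext hcon.1 hcon.2)
  unfold ksq
  rcases this with h1 | h1
  · have h2 : (1:ℤ) ≤ k.1 ^ 2 := by nlinarith [Int.one_le_abs h1, _root_.sq_abs k.1, abs_nonneg k.1]
    have h3 : (1:ℝ) ≤ (k.1:ℝ) ^ 2 := by exact_mod_cast h2
    nlinarith [sq_nonneg (k.2:ℝ)]
  · have h2 : (1:ℤ) ≤ k.2 ^ 2 := by nlinarith [Int.one_le_abs h1, _root_.sq_abs k.2, abs_nonneg k.2]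
    have h3 : (1:ℝ) ≤ (k.2:ℝ) ^ 2 := by exact_mod_cast h2
    nlinarith [sq_nonneg (k.1:ℝ)]

/-- summability of `(1+n²)⁻¹` over ℤ -/
lemma summable_aux1 : Summable (fun n : ℤ => (1 + (n:ℝ)^2)⁻¹) := by
  have h1 : Summable (fun n : ℤ => 1 / (n:ℝ)^2) := summable_one_div_int_pow.mpr one_lt_two
  have h2 : Summable (fun n : ℤ => if n = 0 then (1:ℝ) else 0) :=
    summable_of_ne_finset_zero (s := {0}) (by intro n hn; simp at hn ⊢; simp [hn])
  refine Summable.of_nonneg_of_le (fun n => by positivity) (fun n => ?_) (h2.add h1)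
  by_cases hn : n = 0
  · simp [hn]
  · have h3 : (1:ℝ) ≤ (n:ℝ)^2 := by
      have := Int.one_le_abs hn
      have : (1:ℤ) ≤ n ^ 2 := by nlinarith [Int.one_le_abs hn, _root_.sq_abs n]
      exact_mod_cast this
    simp only [hn, if_false, zero_add, one_div]
    apply inv_anti₀ (by positivity)
    linarith

/-- summability of `|k|⁻⁴` over nonzero lattice points -/
lemma summable_base : Summable (fun k : ℤ × ℤ => if k = 0 then 0 else ((ksq k)^2)⁻¹) := by
  have hp : Summable (fun k : ℤ × ℤ => (1 + (k.1:ℝ)^2)⁻¹ * (1 + (k.2:ℝ)^2)⁻¹) :=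
    Summable.mul_of_nonneg summable_aux1 summable_aux1 (fun n => by positivity) (fun n => by positivity)
  refine Summable.of_nonneg_of_le (fun k => by split <;> positivity) (fun k => ?_) (hp.mul_left 4)
  by_cases hk : k = 0
  · simp [hk]
  · simp only [hk, if_false]
    have h1 := one_le_ksq hk
    have hprod : (1 + (k.1:ℝ)^2) * (1 + (k.2:ℝ)^2) / 4 ≤ (ksq k)^2 := by
      unfold ksq at *
      nlinarith [sq_nonneg ((k.1:ℝ)^2 - (k.2:ℝ)^2), sq_nonneg (k.1:ℝ), sq_nonneg (k.2:ℝ)]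
    have hpos : (0:ℝ) < (1 + (k.1:ℝ)^2) * (1 + (k.2:ℝ)^2) / 4 := by positivity
    calc ((ksq k)^2)⁻¹ ≤ ((1 + (k.1:ℝ)^2) * (1 + (k.2:ℝ)^2) / 4)⁻¹ := inv_anti₀ hpos hprod
      _ = 4 * ((1 + (k.1:ℝ)^2)⁻¹ * (1 + (k.2:ℝ)^2)⁻¹) := by
          rw [← mul_inv]
          field_simp

/-- Cauchy–Schwarz for tsums of nonneg reals -/
lemma tsum_cauchy_schwarz (a b : ℤ × ℤ → ℝ) (ha : ∀ i, 0 ≤ a i) (hb : ∀ i, 0 ≤ b i)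
    (hA : Summable (fun i => a i ^ 2)) (hB : Summable (fun i => b i ^ 2)) :
    ∑' i, a i * b i ≤ Real.sqrt (∑' i, a i ^ 2) * Real.sqrt (∑' i, b i ^ 2) := by
  set A := ∑' i, a i ^ 2 with hAdef
  set B := ∑' i, b i ^ 2 with hBdef
  have hA0 : 0 ≤ A := tsum_nonneg (fun i => sq_nonneg _)
  have hB0 : 0 ≤ B := tsum_nonneg (fun i => sq_nonneg _)
  by_cases hAz : A = 0
  · have hz : ∀ i, a i = 0 := by
      intro i
      have := Summable.le_tsum hA i (fun j _ => sq_nonneg _)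
      rw [← hAdef, hAz] at this
      nlinarith [sq_nonneg (a i), ha i]
    have : ∀ i, a i * b i = 0 := fun i => by rw [hz i, zero_mul]
    rw [tsum_congr this, tsum_zero]
    positivity
  by_cases hBz : B = 0
  · have hz : ∀ i, b i = 0 := by
      intro i
      have := Summable.le_tsum hB i (fun j _ => sq_nonneg _)
      rw [← hBdef, hBz] at this
      nlinarith [sq_nonneg (b i), hb i]
    have : ∀ i, a i * b i = 0 := fun i => by rw [hz i, mul_zero]
    rw [tsum_congr this, tsum_zero]
    positivity
  have hApos : 0 < A := lt_of_le_of_ne hA0 (Ne.symm hAz)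
  have hBpos : 0 < B := lt_of_le_of_ne hB0 (Ne.symm hBz)
  set s := Real.sqrt (B / A) with hs
  set r := Real.sqrt (A / B) with hr
  have hs0 : 0 < s := Real.sqrt_pos.mpr (by positivity)
  have hr0 : 0 < r := Real.sqrt_pos.mpr (by positivity)
  have hsr : s * r = 1 := by
    rw [hs, hr, ← Real.sqrt_mul (by positivity)]
    rw [div_mul_div_comm, mul_comm]
    rw [div_self (by positivity), Real.sqrt_one]
  have key : ∀ i, a i * b i ≤ (s * a i ^ 2 + r * b i ^ 2) / 2 := by
    intro i
    have h1 : Real.sqrt s ^ 2 = s := Real.sq_sqrt hs0.le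
    have h2 : Real.sqrt r ^ 2 = r := Real.sq_sqrt hr0.le
    have h3 : Real.sqrt s * Real.sqrt r = 1 := by
      rw [← Real.sqrt_mul hs0.le, hsr, Real.sqrt_one]
    have h4 : Real.sqrt s * a i * (Real.sqrt r * b i) = a i * b i := by
      calc Real.sqrt s * a i * (Real.sqrt r * b i)
          = (Real.sqrt s * Real.sqrt r) * (a i * b i) := by ring
        _ = a i * b i := by rw [h3, one_mul]
    nlinarith [sq_nonneg (Real.sqrt s * a i - Real.sqrt r * b i), h4]
  have hsum2 : Summable (fun i => (s * a i ^ 2 + r * b i ^ 2) / 2) :=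
    ((hA.mul_left s).add (hB.mul_left r)).div_const 2
  have hsum1 : Summable (fun i => a i * b i) :=
    Summable.of_nonneg_of_le (fun i => mul_nonneg (ha i) (hb i)) key hsum2
  calc ∑' i, a i * b i ≤ ∑' i, (s * a i ^ 2 + r * b i ^ 2) / 2 := Summable.tsum_le_tsum key hsum1 hsum2
    _ = (s * A + r * B) / 2 := by
        rw [tsum_div_const, Summable.tsum_add (hA.mul_left s) (hB.mul_left r),
          tsum_mul_left, tsum_mul_left]
    _ = Real.sqrt A * Real.sqrt B := by
        have e1 : s * A = Real.sqrt A * Real.sqrt B := by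
          rw [hs, Real.sqrt_div hB0 A, div_mul_eq_mul_div, mul_div_assoc,
            Real.div_sqrt]
          ring
        have e2 : r * B = Real.sqrt A * Real.sqrt B := by
          rw [hr, Real.sqrt_div hA0 B, div_mul_eq_mul_div, mul_div_assoc,
            Real.div_sqrt]
        rw [e1, e2]
        ring


lemma ksq_zero : ksq 0 = 0 := by simp [ksq]

/-- Splitting into low and high Fourier modes: for every zero-mean `u ∈ H²(𝕋²)`,
`u = Σ' c_k e^{ik·x}`, `u ≠ 0`, and every `N > 0`,
`‖u‖_C² ≤ (1/(4π²)) ‖∇u‖² ((Σ'_{0<|k|≤N} |k|^{-2})^{1/2} + δ^{1/2} (Σ'_{|k|>N} |k|^{-4})^{1/2})²`,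
with `δ = ‖Δu‖²/‖∇u‖²`, `‖∇u‖² = 4π² Σ' |k|² |c_k|²`, `‖Δu‖² = 4π² Σ' |k|⁴ |c_k|²`. -/
theorem mode_splitting_bound (c : ℤ × ℤ → ℂ) (hc0 : c 0 = 0)
    (hH2 : Summable (fun k => (ksq k) ^ 2 * ‖c k‖ ^ 2))
    (hne : 0 < ∑' k : ℤ × ℤ, ksq k * ‖c k‖ ^ 2)
    (N : ℝ) (hN : 0 < N) :
    ∀ x : ℝ × ℝ,
      ‖∑' k : ℤ × ℤ, c k * Complex.exp (Complex.I * ((k.1 : ℂ) * (x.1 : ℂ) + (k.2 : ℂ) * (x.2 : ℂ)))‖ ^ 2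
        ≤ (1 / (4 * π ^ 2)) * (4 * π ^ 2 * ∑' k : ℤ × ℤ, ksq k * ‖c k‖ ^ 2) *
          (Real.sqrt (∑' k : ℤ × ℤ, if 0 < ksq k ∧ ksq k ≤ N ^ 2 then (ksq k)⁻¹ else 0)
            + Real.sqrt ((∑' k : ℤ × ℤ, (ksq k) ^ 2 * ‖c k‖ ^ 2) /
                (∑' k : ℤ × ℤ, ksq k * ‖c k‖ ^ 2)) *
              Real.sqrt (∑' k : ℤ × ℤ, if N ^ 2 < ksq k then ((ksq k) ^ 2)⁻¹ else 0)) ^ 2 := by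
  intro x
  set G := ∑' k : ℤ × ℤ, ksq k * ‖c k‖ ^ 2 with hGdef
  set D := ∑' k : ℤ × ℤ, (ksq k) ^ 2 * ‖c k‖ ^ 2 with hDdef
  set SL := ∑' k : ℤ × ℤ, if 0 < ksq k ∧ ksq k ≤ N ^ 2 then (ksq k)⁻¹ else 0 with hSLdef
  set SH := ∑' k : ℤ × ℤ, if N ^ 2 < ksq k then ((ksq k) ^ 2)⁻¹ else 0 with hSHdef
  have hGpos : 0 < G := hne
  -- pointwise comparison ksq ≤ ksq²
  have hksqle : ∀ k : ℤ × ℤ, ksq k * ‖c k‖ ^ 2 ≤ (ksq k) ^ 2 * ‖c k‖ ^ 2 := by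
    intro k
    by_cases hk : k = 0
    · subst hk; rw [ksq_zero]; simp
    · have h1 := one_le_ksq hk
      nlinarith [mul_nonneg (mul_nonneg (ksq_nonneg k) (sub_nonneg.mpr h1)) (sq_nonneg (‖c k‖))]
  have hGsum : Summable (fun k : ℤ × ℤ => ksq k * ‖c k‖ ^ 2) :=
    Summable.of_nonneg_of_le (fun k => mul_nonneg (ksq_nonneg k) (sq_nonneg _)) hksqle hH2
  have hD0 : 0 ≤ D := tsum_nonneg (fun k => mul_nonneg (sq_nonneg _) (sq_nonneg _))
  -- summability of |c k|
  have hCsum : Summable (fun k : ℤ × ℤ => ‖c k‖) := by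
    have hb : Summable (fun k : ℤ × ℤ =>
        ((if k = 0 then 0 else ((ksq k) ^ 2)⁻¹) + (ksq k) ^ 2 * ‖c k‖ ^ 2) / 2) :=
      (summable_base.add hH2).div_const 2
    refine Summable.of_nonneg_of_le (fun k => norm_nonneg _) (fun k => ?_) hb
    by_cases hk : k = 0
    · subst hk; rw [hc0]; simp [ksq_zero]
    · simp only [hk, if_false]
      have h1 := one_le_ksq hk
      have h2 : (0:ℝ) < (ksq k) ^ 2 := by positivity
      have hk0 : ksq k ≠ 0 := by linarith
      have hinv : (ksq k)⁻¹ * ksq k = 1 := inv_mul_cancel₀ hk0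
      have hpow : ((ksq k)⁻¹) ^ 2 = ((ksq k) ^ 2)⁻¹ := by
        rw [← inv_pow]
      nlinarith [sq_nonneg ((ksq k)⁻¹ - ksq k * ‖c k‖), hinv, hpow, norm_nonneg (c k)]
  -- summability of the two lattice sums
  have hSLsum : Summable (fun k : ℤ × ℤ => if 0 < ksq k ∧ ksq k ≤ N ^ 2 then (ksq k)⁻¹ else 0) := by
    refine Summable.of_nonneg_of_le (fun k => ?_) (fun k => ?_) (summable_base.mul_left (N ^ 2))
    · split
      · exact inv_nonneg.mpr (ksq_nonneg k)
      · exact le_rfl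
    · by_cases hlow : 0 < ksq k ∧ ksq k ≤ N ^ 2
      · have hk : k ≠ 0 := by
          intro h; rw [h, ksq_zero] at hlow; exact lt_irrefl 0 hlow.1
        simp only [hlow, if_true, hk, if_false]
        have hk0 : ksq k ≠ 0 := ne_of_gt hlow.1
        have h2 : ksq k * ((ksq k) ^ 2)⁻¹ = (ksq k)⁻¹ := by
          rw [pow_two, mul_inv, ← mul_assoc, mul_inv_cancel₀ hk0, one_mul]
        rw [← h2]
        exact mul_le_mul_of_nonneg_right hlow.2 (inv_nonneg.mpr (sq_nonneg _))
      · simp only [hlow, if_false]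
        positivity
  have hSHsum : Summable (fun k : ℤ × ℤ => if N ^ 2 < ksq k then ((ksq k) ^ 2)⁻¹ else 0) := by
    refine Summable.of_nonneg_of_le (fun k => ?_) (fun k => ?_) summable_base
    · split
      · exact inv_nonneg.mpr (sq_nonneg _)
      · exact le_rfl
    · by_cases hhigh : N ^ 2 < ksq k
      · have hk : k ≠ 0 := by
          intro h; rw [h, ksq_zero] at hhigh; nlinarith
        simp only [hhigh, if_true, hk, if_false]
        exact le_rfl
      · simp only [hhigh, if_false]
        split <;> positivity
  -- low part Cauchy-Schwarz
  set aL : ℤ × ℤ → ℝ := fun k => if 0 < ksq k ∧ ksq k ≤ N ^ 2 then Real.sqrt (ksq k)⁻¹ else 0 with haL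
  set bL : ℤ × ℤ → ℝ := fun k => if 0 < ksq k ∧ ksq k ≤ N ^ 2 then Real.sqrt (ksq k) * ‖c k‖ else 0 with hbL
  set aH : ℤ × ℤ → ℝ := fun k => if N ^ 2 < ksq k then Real.sqrt ((ksq k) ^ 2)⁻¹ else 0 with haH
  set bH : ℤ × ℤ → ℝ := fun k => if N ^ 2 < ksq k then ksq k * ‖c k‖ else 0 with hbH
  have haL2 : ∀ k, aL k ^ 2 = if 0 < ksq k ∧ ksq k ≤ N ^ 2 then (ksq k)⁻¹ else 0 := by
    intro k; simp only [haL]; split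
    · exact Real.sq_sqrt (inv_nonneg.mpr (ksq_nonneg k))
    · simp
  have hbL2 : ∀ k, bL k ^ 2 = if 0 < ksq k ∧ ksq k ≤ N ^ 2 then ksq k * ‖c k‖ ^ 2 else 0 := by
    intro k; simp only [hbL]
    split
    · rw [mul_pow, Real.sq_sqrt (ksq_nonneg k)]
    · simp
  have haH2 : ∀ k, aH k ^ 2 = if N ^ 2 < ksq k then ((ksq k) ^ 2)⁻¹ else 0 := by
    intro k; simp only [haH];
    split
    · exact Real.sq_sqrt (inv_nonneg.mpr (sq_nonneg _))
    · simp
  have hbH2 : ∀ k, bH k ^ 2 = if N ^ 2 < ksq k then (ksq k) ^ 2 * ‖c k‖ ^ 2 else 0 := by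
    intro k; simp only [hbH]
    split
    · ring
    · simp
  have haLbL : ∀ k, aL k * bL k = if 0 < ksq k ∧ ksq k ≤ N ^ 2 then ‖c k‖ else 0 := by
    intro k; simp only [haL, hbL]
    split
    · rename_i h
      rw [← mul_assoc, ← Real.sqrt_mul (inv_nonneg.mpr (ksq_nonneg k)),
        inv_mul_cancel₀ (ne_of_gt h.1), Real.sqrt_one, one_mul]
    · simp
  have haHbH : ∀ k, aH k * bH k = if N ^ 2 < ksq k then ‖c k‖ else 0 := by
    intro k; simp only [haH, hbH]
    split
    · rename_i h
      have hkpos : 0 < ksq k := lt_trans (by positivity) h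
      rw [Real.sqrt_inv, Real.sqrt_sq (ksq_nonneg k), ← mul_assoc,
        inv_mul_cancel₀ (ne_of_gt hkpos), one_mul]
    · simp
  have hsum_aL2 : Summable (fun k => aL k ^ 2) := by
    rw [show (fun k => aL k ^ 2) = _ from funext haL2]; exact hSLsum
  have hsum_bL2 : Summable (fun k => bL k ^ 2) := by
    rw [show (fun k => bL k ^ 2) = _ from funext hbL2]
    refine Summable.of_nonneg_of_le (fun k => ?_) (fun k => ?_) hGsum
    · split
      · exact mul_nonneg (ksq_nonneg k) (sq_nonneg _)
      · exact le_rfl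
    · split
      · exact le_rfl
      · exact mul_nonneg (ksq_nonneg k) (sq_nonneg _)
  have hsum_aH2 : Summable (fun k => aH k ^ 2) := by
    rw [show (fun k => aH k ^ 2) = _ from funext haH2]; exact hSHsum
  have hsum_bH2 : Summable (fun k => bH k ^ 2) := by
    rw [show (fun k => bH k ^ 2) = _ from funext hbH2]
    refine Summable.of_nonneg_of_le (fun k => ?_) (fun k => ?_) hH2
    · split
      · exact mul_nonneg (sq_nonneg _) (sq_nonneg _)
      · exact le_rfl
    · split
      · exact le_rfl
      · exact mul_nonneg (sq_nonneg _) (sq_nonneg _)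
  have haLnn : ∀ k, 0 ≤ aL k := fun k => by simp only [haL]; split; exacts [Real.sqrt_nonneg _, le_rfl]
  have hbLnn : ∀ k, 0 ≤ bL k := fun k => by
    simp only [hbL]
    split
    · exact mul_nonneg (Real.sqrt_nonneg _) (norm_nonneg _)
    · exact le_rfl
  have haHnn : ∀ k, 0 ≤ aH k := fun k => by simp only [haH]; split; exacts [Real.sqrt_nonneg _, le_rfl]
  have hbHnn : ∀ k, 0 ≤ bH k := fun k => by
    simp only [hbH]
    split
    · exact mul_nonneg (ksq_nonneg k) (norm_nonneg _)
    · exact le_rfl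
  have hCSL : ∑' k, aL k * bL k ≤ Real.sqrt SL * Real.sqrt G := by
    have h := tsum_cauchy_schwarz aL bL haLnn hbLnn hsum_aL2 hsum_bL2
    have e1 : ∑' k, aL k ^ 2 = SL := tsum_congr haL2
    have e2 : ∑' k, bL k ^ 2 ≤ G := by
      refine Summable.tsum_le_tsum (fun k => ?_) hsum_bL2 hGsum
      rw [hbL2 k]; split
      · exact le_rfl
      · exact mul_nonneg (ksq_nonneg k) (sq_nonneg _)
    calc ∑' k, aL k * bL k ≤ Real.sqrt (∑' k, aL k ^ 2) * Real.sqrt (∑' k, bL k ^ 2) := h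
      _ ≤ Real.sqrt SL * Real.sqrt G := by
          rw [e1]
          exact mul_le_mul_of_nonneg_left (Real.sqrt_le_sqrt e2) (Real.sqrt_nonneg _)
  have hCSH : ∑' k, aH k * bH k ≤ Real.sqrt SH * Real.sqrt D := by
    have h := tsum_cauchy_schwarz aH bH haHnn hbHnn hsum_aH2 hsum_bH2
    have e1 : ∑' k, aH k ^ 2 = SH := tsum_congr haH2
    have e2 : ∑' k, bH k ^ 2 ≤ D := by
      refine Summable.tsum_le_tsum (fun k => ?_) hsum_bH2 hH2
      rw [hbH2 k]; split
      · exact le_rfl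
      · exact mul_nonneg (sq_nonneg _) (sq_nonneg _)
    calc ∑' k, aH k * bH k ≤ Real.sqrt (∑' k, aH k ^ 2) * Real.sqrt (∑' k, bH k ^ 2) := h
      _ ≤ Real.sqrt SH * Real.sqrt D := by
          rw [e1]
          exact mul_le_mul_of_nonneg_left (Real.sqrt_le_sqrt e2) (Real.sqrt_nonneg _)
  -- splitting the sum of |c k|
  have hsplit : ∀ k, ‖c k‖ = aL k * bL k + aH k * bH k := by
    intro k
    rw [haLbL, haHbH]
    by_cases hk : k = 0
    · subst hk
      rw [hc0, ksq_zero]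
      have h1 : ¬ (0:ℝ) < 0 := lt_irrefl 0
      have h2 : ¬ N ^ 2 < (0:ℝ) := not_lt.mpr (by positivity)
      simp [h1, h2]
    · have h1 : 0 < ksq k := lt_of_lt_of_le zero_lt_one (one_le_ksq hk)
      by_cases h2 : ksq k ≤ N ^ 2
      · have h3 : ¬ N ^ 2 < ksq k := not_lt.mpr h2
        simp [h1, h2, h3]
      · have h3 : N ^ 2 < ksq k := lt_of_not_ge h2
        simp [h2, h3]
  have hsumL : Summable (fun k => aL k * bL k) := by
    refine Summable.of_nonneg_of_le (fun k => mul_nonneg (haLnn k) (hbLnn k)) (fun k => ?_) hCsum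
    rw [haLbL k]; split
    · exact le_rfl
    · exact norm_nonneg _
  have hsumH : Summable (fun k => aH k * bH k) := by
    refine Summable.of_nonneg_of_le (fun k => mul_nonneg (haHnn k) (hbHnn k)) (fun k => ?_) hCsum
    rw [haHbH k]; split
    · exact le_rfl
    · exact norm_nonneg _
  have hsum_eq : ∑' k : ℤ × ℤ, ‖c k‖ = (∑' k, aL k * bL k) + ∑' k, aH k * bH k := by
    rw [← Summable.tsum_add hsumL hsumH]
    exact tsum_congr hsplit
  -- bounding the sup norm
  have hexp : ∀ k : ℤ × ℤ,
      ‖c k * Complex.exp (Complex.I * ((k.1 : ℂ) * (x.1 : ℂ) + (k.2 : ℂ) * (x.2 : ℂ)))‖ = ‖c k‖ := by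
    intro k
    rw [norm_mul]
    have : ‖Complex.exp (Complex.I * ((k.1 : ℂ) * (x.1 : ℂ) + (k.2 : ℂ) * (x.2 : ℂ)))‖ = 1 := by
      rw [Complex.norm_exp]
      have : (Complex.I * ((k.1 : ℂ) * (x.1 : ℂ) + (k.2 : ℂ) * (x.2 : ℂ))).re = 0 := by
        simp [Complex.mul_re, Complex.mul_im]
      rw [this, Real.exp_zero]
    rw [this, mul_one]
  have hnorm : ‖∑' k : ℤ × ℤ, c k * Complex.exp (Complex.I * ((k.1 : ℂ) * (x.1 : ℂ) + (k.2 : ℂ) * (x.2 : ℂ)))‖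
      ≤ ∑' k : ℤ × ℤ, ‖c k‖ := by
    have hsumn : Summable (fun k : ℤ × ℤ =>
        ‖c k * Complex.exp (Complex.I * ((k.1 : ℂ) * (x.1 : ℂ) + (k.2 : ℂ) * (x.2 : ℂ)))‖) := by
      rw [show (fun k : ℤ × ℤ =>
        ‖c k * Complex.exp (Complex.I * ((k.1 : ℂ) * (x.1 : ℂ) + (k.2 : ℂ) * (x.2 : ℂ)))‖) = _ from funext hexp]
      exact hCsum
    calc ‖∑' k : ℤ × ℤ, c k * Complex.exp (Complex.I * ((k.1 : ℂ) * (x.1 : ℂ) + (k.2 : ℂ) * (x.2 : ℂ)))‖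
        ≤ ∑' k : ℤ × ℤ, ‖c k * Complex.exp (Complex.I * ((k.1 : ℂ) * (x.1 : ℂ) + (k.2 : ℂ) * (x.2 : ℂ)))‖ :=
          norm_tsum_le_tsum_norm hsumn
      _ = ∑' k : ℤ × ℤ, ‖c k‖ := tsum_congr hexp
  -- the combined bound
  have hDGsqrt : Real.sqrt G * Real.sqrt (D / G) = Real.sqrt D := by
    rw [← Real.sqrt_mul hGpos.le, mul_div_cancel₀ D (ne_of_gt hGpos)]
  have hmain : ‖∑' k : ℤ × ℤ, c k * Complex.exp (Complex.I * ((k.1 : ℂ) * (x.1 : ℂ) + (k.2 : ℂ) * (x.2 : ℂ)))‖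
      ≤ Real.sqrt G * (Real.sqrt SL + Real.sqrt (D / G) * Real.sqrt SH) := by
    have h1 : Real.sqrt G * (Real.sqrt SL + Real.sqrt (D / G) * Real.sqrt SH)
        = Real.sqrt SL * Real.sqrt G + Real.sqrt SH * Real.sqrt D := by
      rw [mul_add, ← mul_assoc, hDGsqrt]
      ring
    rw [h1]
    calc ‖∑' k : ℤ × ℤ, c k * Complex.exp (Complex.I * ((k.1 : ℂ) * (x.1 : ℂ) + (k.2 : ℂ) * (x.2 : ℂ)))‖
        ≤ ∑' k : ℤ × ℤ, ‖c k‖ := hnorm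
      _ = (∑' k, aL k * bL k) + ∑' k, aH k * bH k := hsum_eq
      _ ≤ Real.sqrt SL * Real.sqrt G + Real.sqrt SH * Real.sqrt D := add_le_add hCSL hCSH
  -- conclude by squaring
  have hcoef : (1 / (4 * π ^ 2)) * (4 * π ^ 2 * G) = G := by
    have hπ : (4:ℝ) * π ^ 2 ≠ 0 := by positivity
    field_simp
  rw [hcoef]
  have hGX : G * (Real.sqrt SL + Real.sqrt (D / G) * Real.sqrt SH) ^ 2
      = (Real.sqrt G * (Real.sqrt SL + Real.sqrt (D / G) * Real.sqrt SH)) ^ 2 := by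
    rw [mul_pow, Real.sq_sqrt hGpos.le]
  rw [hGX]
  exact pow_le_pow_left₀ (norm_nonneg _) hmain 2

end
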